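/- Let X be a set partitioned by a map ℛ : X → S into finitely many cells, S finite, F_S ⊆ S, and let F_X = ℛ⁻¹(F_S). Let t(·|x) be a probability measure on X for each x, and for each s define ν_x(s') = t(ℛ⁻¹(s') | x). Suppose 𝒫(s) ⊆ Δ(S) satisfies ν_x ∈ 𝒫(s) for all x ∈ ℛ⁻¹(s). If V : X → [0,1] and W : S → [0,1] satisfy W(ℛ(x)) ≤ V(x) for all x, then for all x ∈ X: min_{ν ∈ 𝒫(ℛ(x))} ∑_{s'} max{𝟙_{F_S}(s'), W(s')}ν(s') ≤ ∫_X max{𝟙_{F_X}(ξ), V(ξ)} t(dξ | x). -/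

import Mathlib

/-!
Pushing `t(·|x)` forward along `ℛ` turns the integral of `ξ ↦ max (𝟙_{F_S}, W) (ℛ ξ)` into the
finite sum `∑ s', max (𝟙_{F_S}(s'), W(s')) ν_x(s')`, and `ν_x` is one of the distributions the
minimum ranges over. Since `𝟙_{F_X} = 𝟙_{F_S} ∘ ℛ` and `W ∘ ℛ ≤ V`, that integrand is dominated by
`max (𝟙_{F_X}, V)` pointwise.
-/

open MeasureTheory Set

theorem integral_comp_eq_sum_measureReal_preimage_smul
    {X S E : Type*} [MeasurableSpace X] [Fintype S] [MeasurableSpace S]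
    [MeasurableSingletonClass S] [NormedAddCommGroup E] [NormedSpace ℝ E] [CompleteSpace E]
    {μ : Measure X} [IsFiniteMeasure μ] {R : X → S} (hR : Measurable R) (c : S → E) :
    ∫ ξ, c (R ξ) ∂μ = ∑ s, μ.real (R ⁻¹' {s}) • c s := by
  rw [← integral_map hR.aemeasurable StronglyMeasurable.of_discrete.aestronglyMeasurable,
    integral_fintype .of_finite]
  simp only [map_measureReal_apply hR (measurableSet_singleton _)]

theorem max_indicator_one_mem_Icc {α : Type*} (s : Set α) (x : α) {v : ℝ}
    (hv : v ≤ 1) : max (s.indicator (fun _ => (1 : ℝ)) x) v ∈ Icc (0 : ℝ) 1 :=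
  ⟨le_max_of_le_left (indicator_nonneg (fun _ _ => zero_le_one) x),
    max_le (indicator_le_self' (fun _ _ => zero_le_one) x) hv⟩

theorem one_step_simulation_inequality_general
    {X : Type*} [MeasurableSpace X]
    {S : Type*} [Fintype S] [MeasurableSpace S] [MeasurableSingletonClass S]
    (R : X → S) (hR : Measurable R)
    (FS : Set S)
    (t : X → Measure X) (ht : ∀ x, IsProbabilityMeasure (t x))
    (P : S → Set (S → ℝ))
    (hPcomp : ∀ s, IsCompact (P s))
    (hP : ∀ x : X, (fun s' : S => ((t x) (R ⁻¹' {s'})).toReal) ∈ P (R x))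
    (V : X → ℝ) (hVmeas : Measurable V) (hV : ∀ x, V x ∈ Set.Icc (0:ℝ) 1)
    (W : S → ℝ)
    (hWV : ∀ x, W (R x) ≤ V x) :
    ∀ x : X,
      sInf ((fun ν : S → ℝ =>
          ∑ s', max (Set.indicator FS (fun _ => (1:ℝ)) s') (W s') * ν s') '' P (R x)) ≤
        ∫ ξ, max (Set.indicator (R ⁻¹' FS) (fun _ => (1:ℝ)) ξ) (V ξ) ∂(t x) := by
  intro x
  set c : S → ℝ := fun s' => max (FS.indicator (fun _ => 1) s') (W s')
  have hind (ξ : X) : (R ⁻¹' FS).indicator (fun _ => (1 : ℝ)) ξ = FS.indicator (fun _ => 1) (R ξ) :=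
    indicator_comp_right (g := fun _ => (1 : ℝ)) R
  have hintegrable : Integrable (fun ξ => max ((R ⁻¹' FS).indicator (fun _ => (1 : ℝ)) ξ) (V ξ))
      (t x) := by
    refine .of_bound ((measurable_const.indicator (hR (toFinite FS).measurableSet)).max
      hVmeas).aestronglyMeasurable 1 (ae_of_all _ fun ξ => ?_)
    have h := max_indicator_one_mem_Icc (R ⁻¹' FS) ξ (hV ξ).2
    rw [Real.norm_of_nonneg h.1]
    exact h.2
  calc _ ≤ ∑ s', c s' * ((t x) (R ⁻¹' {s'})).toReal :=
        csInf_le ((hPcomp (R x)).bddBelow_image (by fun_prop))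
          (mem_image_of_mem (fun ν : S → ℝ => ∑ s', c s' * ν s') (hP x))
    _ = ∫ ξ, c (R ξ) ∂(t x) := by
        simp only [integral_comp_eq_sum_measureReal_preimage_smul hR, smul_eq_mul, mul_comm,
          Measure.real]
    _ ≤ _ := integral_mono_of_nonneg
        (ae_of_all _ fun ξ => le_max_of_le_left (indicator_nonneg (fun _ _ => zero_le_one) _))
        hintegrable (ae_of_all _ fun ξ => by
          simp only [c, hind]
          exact max_le_max le_rfl (hWV ξ))

theorem one_step_simulation_inequality
    {X : Type*} [MeasurableSpace X]
    {S : Type*} [Fintype S] [MeasurableSpace S] [MeasurableSingletonClass S]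
    (R : X → S) (hR : Measurable R)
    (FS : Set S)
    (t : X → Measure X) (ht : ∀ x, IsProbabilityMeasure (t x))
    (P : S → Set (S → ℝ))
    (hPne : ∀ s, (P s).Nonempty) (hPcomp : ∀ s, IsCompact (P s))
    (hP : ∀ x : X, (fun s' : S => ((t x) (R ⁻¹' {s'})).toReal) ∈ P (R x))
    (V : X → ℝ) (hVmeas : Measurable V) (hV : ∀ x, V x ∈ Set.Icc (0:ℝ) 1)
    (W : S → ℝ) (hW : ∀ s, W s ∈ Set.Icc (0:ℝ) 1)
    (hWV : ∀ x, W (R x) ≤ V x) :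
    ∀ x : X,
      sInf ((fun ν : S → ℝ =>
          ∑ s', max (Set.indicator FS (fun _ => (1:ℝ)) s') (W s') * ν s') '' P (R x)) ≤
        ∫ ξ, max (Set.indicator (R ⁻¹' FS) (fun _ => (1:ℝ)) ξ) (V ξ) ∂(t x) :=
  one_step_simulation_inequality_general R hR FS t ht P hPcomp hP V hVmeas hV W hWV
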